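/- arXiv:1809.08217 — 3 statements merged into one kernel-verified Lean document; each statement's English description precedes it below -/
import Mathlib

section
/- Let f ∈ L∞(𝕋) and let σ : ℤ → ℤ be a bijection. The following are equivalent: (a) for every g ∈ L²(𝕋), ‖S_{σ,N}[f]·g − f·g‖_{L²} → 0 as N → ∞; (b) for every g, h ∈ L²(𝕋), ⟨S_{σ,N}[f]·g − f·g, h⟩_{L²} → 0 as N → ∞; (c) sup_{N∈ℕ} ‖S_{σ,N}[f]‖_∞ < ∞. -/
open MeasureTheory Filter Topology ComplexConjugate
open scoped ENNReal

/-- The torus `ℝ/ℤ` with its Haar probability measure. -/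
noncomputable def muT : Measure UnitAddCircle := AddCircle.haarAddCircle

/-- The rearranged partial Fourier sum `S_{σ,N}[f](t) = ∑_{|n|≤N} f̂(σ n) e^{2πi σ(n) t}`. -/
noncomputable def rSum (f : UnitAddCircle → ℂ) (σ : ℤ ≃ ℤ) (N : ℕ)
    (t : UnitAddCircle) : ℂ :=
  ∑ n ∈ Finset.Icc (-(N : ℤ)) (N : ℤ), fourierCoeff f (σ n) * fourier (σ n) t

/-!
Whatever the order `σ`, the partial sums `S_N = S_{σ,N}[f]` converge to `f` in `L²`, because the
Fourier series of `f` converges unconditionally in `L²`. (a) ⇒ (b) is Cauchy–Schwarz. For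
(b) ⇒ (c), regard multiplication by `S_N - f` as operators on `L²`: weak operator convergence makes
them uniformly bounded (Banach–Steinhaus, applied twice), and the norm of a multiplication operator
dominates the `L^∞` norm of its symbol. For (c) ⇒ (a), approximate `g` in `L²` by a simple
function `s` and use `‖(S_N - f) g‖₂ ≤ ‖S_N - f‖_∞ ‖g - s‖₂ + ‖s‖_∞ ‖S_N - f‖₂`.
-/

lemma Filter.Tendsto.iSup_enorm_lt_top {E : Type*} [NormedAddCommGroup E] {u : ℕ → E} {a : E}
    (h : Tendsto u atTop (𝓝 a)) : (⨆ n, ‖u n‖ₑ) < ⊤ := by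
  obtain ⟨C, hC⟩ := h.norm.bddAbove_range
  refine lt_of_le_of_lt (iSup_le fun n => ?_) (ENNReal.ofReal_lt_top (r := C))
  rw [← ofReal_norm]
  exact ENNReal.ofReal_le_ofReal (hC ⟨n, rfl⟩)

lemma ContinuousLinearMap.iSup_enorm_lt_top_of_forall_inner {𝕜 E F ι : Type*} [RCLike 𝕜]
    [NormedAddCommGroup E] [NormedSpace 𝕜 E] [CompleteSpace E]
    [NormedAddCommGroup F] [InnerProductSpace 𝕜 F] [CompleteSpace F] {T : ι → E →L[𝕜] F}
    (h : ∀ x y, (⨆ i, ‖inner 𝕜 (T i x) y‖ₑ) < ⊤) : (⨆ i, ‖T i‖ₑ) < ⊤ := by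
  have hnorm : ∀ v : F, ‖innerSL 𝕜 v‖₊ = ‖v‖₊ := fun v => NNReal.eq (innerSL_apply_norm 𝕜 v)
  simp only [enorm_eq_nnnorm] at h ⊢
  refine banach_steinhaus_iSup_nnnorm fun x => ?_
  simpa only [hnorm] using banach_steinhaus_iSup_nnnorm (g := fun i => innerSL 𝕜 (T i x)) (h x)

section

variable {α ι : Type*} [MeasurableSpace α] {μ : Measure α}

lemma eLpNorm_top_le_of_eLpNorm_mul_le [IsFiniteMeasure μ] {m : α → ℂ}
    (hm : AEStronglyMeasurable m μ) {p : ℝ≥0∞} (hp0 : p ≠ 0) (hp : p ≠ ⊤) {C : ℝ≥0∞}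
    (hC : ∀ g : α → ℂ, MemLp g p μ → eLpNorm (fun x => m x * g x) p μ ≤ C * eLpNorm g p μ) :
    eLpNorm m ⊤ μ ≤ C := by
  rw [eLpNorm_congr_ae hm.ae_eq_mk, eLpNorm_exponent_top, eLpNormEssSup]
  by_contra! hlt
  obtain ⟨b, hCb, hb⟩ := exists_between hlt
  set A := {x | b < ‖hm.mk m x‖ₑ}
  have hA : MeasurableSet A := measurableSet_lt measurable_const hm.stronglyMeasurable_mk.enorm
  have hμA : μ A ≠ 0 := by
    intro h0
    refine (essSup_le_of_ae_le b ?_).not_gt hb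
    filter_upwards [measure_eq_zero_iff_ae_notMem.mp h0] with x hx
    exact not_lt.mp hx
  have hlow : b * μ A ^ (1 / p.toReal)
      ≤ eLpNorm (fun x => m x * A.indicator (fun _ => (1 : ℂ)) x) p μ := by
    rw [← enorm_eq_self b, ← eLpNorm_indicator_const hA hp0 hp]
    refine eLpNorm_mono_enorm_ae ?_
    filter_upwards [hm.ae_eq_mk] with x hx
    by_cases hxA : x ∈ A
    · simpa [hxA, hx] using hxA.le
    · simp [hxA]
  have hup := hC _ (memLp_indicator_const p hA (1 : ℂ) (Or.inr (measure_ne_top μ A)))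
  rw [eLpNorm_indicator_const hA hp0 hp, enorm_one, one_mul] at hup
  have hpow0 : μ A ^ (1 / p.toReal) ≠ 0 := by simp [hμA]
  have hpow_top : μ A ^ (1 / p.toReal) ≠ ⊤ := by simp [measure_ne_top]
  exact hCb.not_ge ((ENNReal.mul_le_mul_iff_left hpow0 hpow_top).mp (hlow.trans hup))

lemma tendsto_integral_mul_conj_of_tendsto_eLpNorm {l : Filter ι} {w : ι → α → ℂ} {h : α → ℂ}
    (hw : ∀ i, AEStronglyMeasurable (w i) μ) (hw0 : Tendsto (fun i => eLpNorm (w i) 2 μ) l (𝓝 0))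
    (hh : MemLp h 2 μ) : Tendsto (fun i => ∫ x, w i x * conj (h x) ∂μ) l (𝓝 0) := by
  have hbound : ∀ i, ‖∫ x, w i x * conj (h x) ∂μ‖ₑ ≤ eLpNorm (w i) 2 μ * eLpNorm h 2 μ := by
    intro i
    calc ‖∫ x, w i x * conj (h x) ∂μ‖ₑ ≤ eLpNorm (fun x => w i x * conj (h x)) 1 μ := by
          rw [eLpNorm_one_eq_lintegral_enorm]; exact enorm_integral_le_lintegral_enorm _
      _ ≤ eLpNorm (w i) 2 μ * eLpNorm h 2 μ := by
          simpa using eLpNorm_le_eLpNorm_mul_eLpNorm_of_nnnorm (p := 2) (q := 2) (hw i) hh.1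
            (fun a b => a * conj b) 1 (.of_forall fun x => by simp)
  have hlim : Tendsto (fun i => eLpNorm (w i) 2 μ * eLpNorm h 2 μ) l (𝓝 0) := by
    simpa using ENNReal.Tendsto.mul_const hw0 (Or.inr hh.eLpNorm_ne_top)
  exact tendsto_zero_iff_enorm_tendsto_zero.mpr
    (tendsto_of_tendsto_of_tendsto_of_le_of_le tendsto_const_nhds hlim (fun _ => zero_le) hbound)

lemma tendsto_eLpNorm_mul_of_tendsto_of_iSup_lt_top {l : Filter ι} {u : ι → α → ℂ} {g : α → ℂ}
    {p : ℝ≥0∞} (hp1 : 1 ≤ p) (hp : p ≠ ⊤) (hu : ∀ i, AEStronglyMeasurable (u i) μ)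
    (hu_bdd : (⨆ i, eLpNorm (u i) ⊤ μ) < ⊤) (hu0 : Tendsto (fun i => eLpNorm (u i) p μ) l (𝓝 0))
    (hg : MemLp g p μ) : Tendsto (fun i => eLpNorm (fun x => u i x * g x) p μ) l (𝓝 0) := by
  set K := ⨆ i, eLpNorm (u i) ⊤ μ
  rw [ENNReal.tendsto_nhds_zero]
  intro ε hε
  obtain ⟨δ, hδ, hδK⟩ := ENNReal.exists_pos_mul_lt hu_bdd.ne hε.ne'
  obtain ⟨s, hgs, -⟩ := hg.exists_simpleFunc_eLpNorm_sub_lt hp hδ.ne'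
  have hbound : ∀ i, eLpNorm (fun x => u i x * g x) p μ
      ≤ K * eLpNorm (g - ⇑s) p μ + eLpNorm s ⊤ μ * eLpNorm (u i) p μ := by
    intro i
    have hsplit : (fun x => u i x * g x) = u i * (g - ⇑s) + ⇑s * u i := by
      funext x; simp only [Pi.add_apply, Pi.mul_apply, Pi.sub_apply]; ring
    rw [hsplit]
    refine (eLpNorm_add_le ((hu i).smul (hg.1.sub s.aestronglyMeasurable))
      (s.aestronglyMeasurable.smul (hu i)) hp1).trans (add_le_add ?_ ?_)
    · exact (eLpNorm_smul_le_eLpNorm_top_mul_eLpNorm p (hg.1.sub s.aestronglyMeasurable) _).trans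
        (mul_le_mul_left (le_iSup (fun i => eLpNorm (u i) ⊤ μ) i) _)
    · exact eLpNorm_smul_le_eLpNorm_top_mul_eLpNorm p (hu i) _
  have hlim : Tendsto (fun i => K * eLpNorm (g - ⇑s) p μ + eLpNorm s ⊤ μ * eLpNorm (u i) p μ) l
      (𝓝 (K * eLpNorm (g - ⇑s) p μ)) := by
    simpa using tendsto_const_nhds.add
      (ENNReal.Tendsto.const_mul hu0 (Or.inr (s.memLp_top μ).eLpNorm_ne_top))
  have hlt : K * eLpNorm (g - ⇑s) p μ < ε :=
    lt_of_le_of_lt (mul_le_mul' le_rfl hgs.le) (mul_comm δ K ▸ hδK)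
  filter_upwards [hlim.eventually (gt_mem_nhds hlt)] with i hi
  exact (hbound i).trans hi.le

lemma iSup_eLpNorm_sub_lt_top_iff {E : Type*} [NormedAddCommGroup E] {F : ι → α → E}
    {f : α → E} {p : ℝ≥0∞} (hp : 1 ≤ p) (hF : ∀ i, AEStronglyMeasurable (F i) μ)
    (hf : MemLp f p μ) : (⨆ i, eLpNorm (F i - f) p μ) < ⊤ ↔ (⨆ i, eLpNorm (F i) p μ) < ⊤ := by
  constructor <;> intro hlt <;>
    refine lt_of_le_of_lt (iSup_le fun i => ?_) (ENNReal.add_lt_top.mpr ⟨hlt, hf.eLpNorm_lt_top⟩)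
  · calc eLpNorm (F i) p μ = eLpNorm (F i - f + f) p μ := by rw [sub_add_cancel]
      _ ≤ eLpNorm (F i - f) p μ + eLpNorm f p μ := eLpNorm_add_le ((hF i).sub hf.1) hf.1 hp
      _ ≤ _ := add_le_add (le_iSup (fun i => eLpNorm (F i - f) p μ) i) le_rfl
  · exact (eLpNorm_sub_le (hF i) hf.1 hp).trans
      (add_le_add (le_iSup (fun i => eLpNorm (F i) p μ) i) le_rfl)

lemma iSup_eLpNorm_top_lt_top_of_integral_mul_conj [IsFiniteMeasure μ] {m : ι → α → ℂ}
    (hm : ∀ i, MemLp (m i) ⊤ μ)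
    (hbdd : ∀ g h : α → ℂ, MemLp g 2 μ → MemLp h 2 μ →
      (⨆ i, ‖∫ x, m i x * g x * conj (h x) ∂μ‖ₑ) < ⊤) :
    (⨆ i, eLpNorm (m i) ⊤ μ) < ⊤ := by
  let T i : Lp ℂ 2 μ →L[ℂ] Lp ℂ 2 μ := (ContinuousLinearMap.mul ℂ ℂ).holderL μ ⊤ 2 2 (hm i).toLp
  have hT : ∀ i g, T i g =ᵐ[μ] fun x => m i x * g x := by
    intro i g
    filter_upwards [(ContinuousLinearMap.mul ℂ ℂ).coeFn_holder (r := 2) (hm i).toLp g,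
      (hm i).coeFn_toLp] with x h1 h2
    simp [T, h1, h2]
  have hinner : ∀ i (g h : Lp ℂ 2 μ),
      ‖inner ℂ (T i g) h‖ₑ = ‖∫ x, m i x * g x * conj (h x) ∂μ‖ₑ := by
    intro i g h
    rw [L2.inner_def, ← RCLike.enorm_conj, ← integral_conj]
    congr 1
    refine integral_congr_ae ?_
    filter_upwards [hT i g] with x hx
    simp [hx, mul_comm]
  have hT_bdd := ContinuousLinearMap.iSup_enorm_lt_top_of_forall_inner (T := T) fun g h => by
    simpa only [hinner] using hbdd g h (Lp.memLp g) (Lp.memLp h)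
  refine lt_of_le_of_lt (iSup_mono fun i => ?_) hT_bdd
  refine eLpNorm_top_le_of_eLpNorm_mul_le (hm i).1 two_ne_zero ENNReal.ofNat_ne_top fun g hg => ?_
  calc eLpNorm (fun x => m i x * g x) 2 μ = ‖T i (hg.toLp g)‖ₑ := by
        rw [Lp.enorm_def]
        refine eLpNorm_congr_ae ?_
        filter_upwards [hT i (hg.toLp g), hg.coeFn_toLp] with x h1 h2
        rw [h1, h2]
    _ ≤ ‖T i‖ₑ * ‖hg.toLp g‖ₑ := (T i).le_opENorm _
    _ = ‖T i‖ₑ * eLpNorm g 2 μ := by rw [Lp.enorm_def, eLpNorm_congr_ae hg.coeFn_toLp]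

end

instance : IsProbabilityMeasure muT := by unfold muT; infer_instance

open Finset in
lemma rSum_eq_coe_sum (f : UnitAddCircle → ℂ) (σ : ℤ ≃ ℤ) (N : ℕ) :
    rSum f σ N = ⇑(∑ n ∈ Icc (-(N : ℤ)) N, fourierCoeff f (σ n) • fourier (σ n)) := by
  ext t
  simp [rSum]

lemma memLp_rSum (f : UnitAddCircle → ℂ) (σ : ℤ ≃ ℤ) (N : ℕ) (p : ℝ≥0∞) [Fact (1 ≤ p)]
    (μ : Measure UnitAddCircle) [IsFiniteMeasure μ] : MemLp (rSum f σ N) p μ :=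
  rSum_eq_coe_sum f σ N ▸ ContinuousMap.memLp _ ℂ _

open Finset in
lemma tendsto_eLpNorm_rSum_sub {f : UnitAddCircle → ℂ} (hf : MemLp f 2 muT) (σ : ℤ ≃ ℤ) :
    Tendsto (fun N => eLpNorm (rSum f σ N - f) 2 muT) atTop (𝓝 0) := by
  unfold muT at hf ⊢
  have hsum := (σ.hasSum_iff.mpr (hasSum_fourier_series_L2 (hf.toLp f))).comp tendsto_Icc_neg
  have hpartial : ∀ N : ℕ, ∑ n ∈ Icc (-(N : ℤ)) N,
      fourierCoeff (hf.toLp f) (σ n) • fourierLp 2 (σ n) = (memLp_rSum f σ N 2 _).toLp := by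
    intro N
    rw [fourierCoeff_congr_ae hf.coeFn_toLp]
    simp_rw [fourierLp, ← map_smul, ← map_sum]
    refine Lp.ext ?_
    filter_upwards [ContinuousMap.coeFn_toLp (p := 2) (𝕜 := ℂ) _
      (∑ n ∈ Icc (-(N : ℤ)) N, fourierCoeff f (σ n) • fourier (σ n)),
      (memLp_rSum f σ N 2 _).coeFn_toLp] with t h1 h2
    rw [h1, h2, rSum_eq_coe_sum]
  have hL2 : Tendsto (fun N => (memLp_rSum f σ N 2 _).toLp) atTop (𝓝 (hf.toLp f)) :=
    hsum.congr hpartial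
  simpa only [Lp.edist_toLp_toLp] using tendsto_iff_edist_tendsto_0.mp hL2

/-- For `f ∈ L∞` and a fixed bijection `σ`, SOT convergence, WOT convergence, and uniform
boundedness of `‖S_{σ,N}[f]‖_∞` are all equivalent. -/
theorem stmt_2 (f : UnitAddCircle → ℂ) (hf : MemLp f ⊤ muT) (σ : ℤ ≃ ℤ) :
    ((∀ g : UnitAddCircle → ℂ, MemLp g 2 muT →
        Tendsto (fun N => eLpNorm (fun t => rSum f σ N t * g t - f t * g t) 2 muT)
          atTop (nhds 0)) ↔
      (∀ g h : UnitAddCircle → ℂ, MemLp g 2 muT → MemLp h 2 muT →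
        Tendsto (fun N => ∫ t, (rSum f σ N t * g t - f t * g t) * conj (h t) ∂muT)
          atTop (nhds 0))) ∧
    ((∀ g h : UnitAddCircle → ℂ, MemLp g 2 muT → MemLp h 2 muT →
        Tendsto (fun N => ∫ t, (rSum f σ N t * g t - f t * g t) * conj (h t) ∂muT)
          atTop (nhds 0)) ↔
      (⨆ N : ℕ, eLpNorm (fun t => rSum f σ N t) ⊤ muT) < ⊤) := by
  have hS (N : ℕ) : MemLp (rSum f σ N) ⊤ muT := memLp_rSum f σ N ⊤ muT
  have hdiff (N : ℕ) : MemLp (rSum f σ N - f) ⊤ muT := (hS N).sub hf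
  have hbdd_iff := iSup_eLpNorm_sub_lt_top_iff le_top (fun N => (hS N).1) hf
  have hmul (N : ℕ) (g : UnitAddCircle → ℂ) (t : UnitAddCircle) :
      rSum f σ N t * g t - f t * g t = (rSum f σ N - f) t * g t := by
    rw [Pi.sub_apply, sub_mul]
  have cycle {a b c : Prop} (ab : a → b) (bc : b → c) (ca : c → a) : (a ↔ b) ∧ (b ↔ c) :=
    ⟨⟨ab, ca ∘ bc⟩, ⟨bc, ab ∘ ca⟩⟩
  refine cycle (fun hA g h hg hh => ?_) (fun hB => ?_) (fun hC g hg => ?_)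
  · exact tendsto_integral_mul_conj_of_tendsto_eLpNorm
      (fun N => ((hS N).1.mul hg.1).sub (hf.1.mul hg.1)) (hA g hg) hh
  · refine hbdd_iff.mp <| iSup_eLpNorm_top_lt_top_of_integral_mul_conj hdiff fun g h hg hh => ?_
    simpa only [hmul] using (hB g h hg hh).iSup_enorm_lt_top
  · simpa only [hmul] using tendsto_eLpNorm_mul_of_tendsto_of_iSup_lt_top one_le_two
      ENNReal.ofNat_ne_top (fun N => (hdiff N).1) (hbdd_iff.mpr hC)
      (tendsto_eLpNorm_rSum_sub (hf.mono_exponent le_top) σ) hg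
end

section
/- Let C₀ ≥ 1 and suppose there exists a sequence of signs (ε_n)_{n≥0} ⊆ {−1,1} such that ‖∑_{n=0}^{N} ε_n e^{2πin·}‖_∞ ≤ C₀·√(N+1) for infinitely many N ∈ ℕ. Then for every c with 0 < c < (2√2)/(3√(3π)·C₀) and every Lebesgue measurable set E ⊆ 𝕋 with |E| > 0, there exist a continuous function f on 𝕋 with ‖f‖_∞ ≤ 1 and a sign sequence ε ∈ {−1,1}^ℤ such that ‖T_ε[f]·𝟙_E‖_{L²} ≥ c. -/
/-!
Take a Lebesgue density point `x₀` of `E` and a good `N`. The trigonometric polynomial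
`f(t) = (C₀√(N+1))⁻¹ ∑_{n≤N} ε_n e_n(t - x₀)` has sup norm at most `1`, and multiplying its
Fourier coefficients by the same signs `ε_n` turns it into `(C₀√(N+1))⁻¹ ∑_{n≤N} e_n(t - x₀)`.
All these exponentials are nearly aligned on the ball of radius `q/(3π(N+1))` around `x₀`, so
there `|T_ε f| ≥ (2/3)√(N+1)/C₀`. For large `N` the set `E` fills a proportion `q` of that ball,
hence `‖T_ε f · 𝟙_E‖₂² ≥ (4/9)(N+1)/C₀² · 2q²/(3π(N+1)) = q² · 8/(27πC₀²)`, independently of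
`N`; this is `c²` for `q = c · 3√(3π)C₀/(2√2) < 1`.
-/

open MeasureTheory Filter Topology ComplexConjugate
open scoped ENNReal

/-- A sequence of signs indexed by `ℤ`. -/
def IsSign (ε : ℤ → ℝ) : Prop := ∀ n, ε n = 1 ∨ ε n = -1

/-- The sign-changed partial Fourier sum `T_{ε,N}[f](t) = ∑_{|n|≤N} ε_n f̂(n) e^{2πint}`. -/
noncomputable def sgnSum (f : UnitAddCircle → ℂ) (ε : ℤ → ℝ) (N : ℕ)
    (t : UnitAddCircle) : ℂ :=
  ∑ n ∈ Finset.Icc (-(N : ℤ)) (N : ℤ), (ε n : ℂ) * fourierCoeff f n * fourier n t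

open Metric Finset
open scoped Real

theorem muT_eq_volume : muT = volume := by
  rw [muT, AddCircle.volume_eq_smul_haarAddCircle]
  simp

theorem fourierCoeff_sum_smul_fourier {T : ℝ} [Fact (0 < T)] (s : Finset ℤ) (a : ℤ → ℂ)
    (m : ℤ) :
    fourierCoeff (⇑(∑ n ∈ s, a n • fourier n : C(AddCircle T, ℂ))) m =
      if m ∈ s then a m else 0 := by
  rw [ContinuousMap.coe_sum, fourierCoeff.sum _ _ fun n _ =>
    ((ContinuousMap.memLp AddCircle.haarAddCircle ℂ (p := 1) (a n • fourier n)).integrable le_rfl)]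
  simp [fourierCoeff.const_smul, fourierCoeff_fourier, Pi.single_apply]

theorem sgnSum_sum_smul_fourier {s : Finset ℤ} {N : ℕ} (hs : s ⊆ Icc (-(N : ℤ)) N)
    (a : ℤ → ℂ) (ε : ℤ → ℝ) :
    sgnSum (⇑(∑ n ∈ s, a n • fourier n)) ε N = ⇑(∑ n ∈ s, (ε n * a n) • fourier n) := by
  ext t
  simp only [sgnSum, fourierCoeff_sum_smul_fourier, mul_ite, mul_zero, ite_mul, zero_mul]
  rw [Finset.sum_ite_mem, Finset.inter_eq_right.2 hs]
  simp [mul_assoc]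

theorem UnitAddCircle.exists_coe_eq_abs_eq_norm (u : UnitAddCircle) :
    ∃ y : ℝ, (y : UnitAddCircle) = u ∧ |y| = ‖u‖ := by
  obtain ⟨x, rfl⟩ := QuotientAddGroup.mk_surjective u
  exact ⟨x - round x, by simp, UnitAddCircle.norm_eq.symm⟩

theorem fourier_coe_apply_re (n : ℤ) (y : ℝ) :
    (fourier n (y : UnitAddCircle)).re = Real.cos (2 * π * n * y) := by
  rw [fourier_coe_apply, ← Complex.exp_ofReal_mul_I_re]
  congr 2
  push_cast
  ring

theorem fourier_neg_mul_fourier {T : ℝ} (n : ℤ) (x t : AddCircle T) :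
    fourier n (-x) * fourier n t = fourier n (t - x) := by
  rw [sub_eq_add_neg, fourier_apply, fourier_apply, fourier_apply, smul_add,
    AddCircle.toCircle_add, Circle.coe_mul, mul_comm]

theorem sum_smul_fourier_neg_apply {T : ℝ} (s : Finset ℤ) (a : ℤ → ℂ) (x t : AddCircle T) :
    (∑ n ∈ s, (a n * fourier n (-x)) • fourier n) t = ∑ n ∈ s, a n * fourier n (t - x) := by
  simp only [ContinuousMap.coe_sum, Finset.sum_apply, ContinuousMap.coe_smul, Pi.smul_apply,
    smul_eq_mul, mul_assoc, fourier_neg_mul_fourier]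

theorem two_thirds_mul_card_le_norm_sum_fourier (s : Finset ℤ) (u : UnitAddCircle)
    (hs : ∀ n ∈ s, 3 * π * |(n : ℝ)| * ‖u‖ ≤ 1) :
    2 / 3 * #s ≤ ‖∑ n ∈ s, fourier n u‖ := by
  obtain ⟨y, rfl, hy⟩ := UnitAddCircle.exists_coe_eq_abs_eq_norm u
  have hterm : ∀ n ∈ s, 2 / 3 ≤ (fourier n (y : UnitAddCircle)).re := by
    intro n hn
    have hsmall : |2 * π * n * y| ≤ 2 / 3 := by
      rw [abs_mul, abs_mul, abs_of_pos (by positivity : 0 < 2 * π), hy]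
      linarith [hs n hn]
    rw [fourier_coe_apply_re]
    nlinarith [Real.one_sub_sq_div_two_le_cos (x := 2 * π * n * y), sq_abs (2 * π * n * y),
      abs_nonneg (2 * π * n * y)]
  calc 2 / 3 * (#s : ℝ) = ∑ _n ∈ s, (2 / 3 : ℝ) := by simp [mul_comm]
    _ ≤ ∑ n ∈ s, (fourier n (y : UnitAddCircle)).re := sum_le_sum hterm
    _ = (∑ n ∈ s, fourier n (y : UnitAddCircle)).re := (Complex.re_sum _ _).symm
    _ ≤ _ := Complex.re_le_norm _

theorem IsUnifLocDoublingMeasure.exists_eventually_le_measure_inter_closedBall {α : Type*}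
    [PseudoMetricSpace α] [MeasurableSpace α] [SecondCountableTopology α] [BorelSpace α]
    (μ : Measure α) [IsLocallyFiniteMeasure μ] [IsUnifLocDoublingMeasure μ] {E : Set α}
    (hE : μ E ≠ 0) {θ : ℝ≥0∞} (hθ : θ < 1) :
    ∃ x, ∀ᶠ r in 𝓝[>] 0, θ * μ (closedBall x r) ≤ μ (E ∩ closedBall x r) := by
  have : (ae (μ.restrict E)).NeBot := ae_neBot.2 (by simpa using hE)
  obtain ⟨x, hx⟩ := (ae_tendsto_measure_inter_div μ E 1).exists
  have hlim := hx (fun _ => x) id tendsto_id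
    (eventually_mem_nhdsWithin.mono fun r hr => by simpa using le_of_lt hr)
  exact ⟨x, (hlim.eventually (lt_mem_nhds hθ)).mono fun r hr => ENNReal.mul_le_of_le_div hr.le⟩

theorem ofReal_sq_mul_measure_le_eLpNorm_sq {α E : Type*} [MeasurableSpace α] {μ : Measure α}
    [NormedAddCommGroup E] {g : α → E} (hg : AEStronglyMeasurable g μ) {A : Set α} {m : ℝ}
    (hA : ∀ x ∈ A, m ≤ ‖g x‖) :
    ENNReal.ofReal m ^ 2 * μ A ≤ eLpNorm g 2 μ ^ 2 := by
  have h := mul_meas_ge_le_pow_eLpNorm' μ two_ne_zero ENNReal.ofNat_ne_top hg (ENNReal.ofReal m)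
  simp only [ENNReal.toReal_ofNat, ENNReal.rpow_ofNat] at h
  refine le_trans (mul_le_mul_right (measure_mono fun x hx => ?_) _) h
  rw [Set.mem_ofPred_eq, ← ofReal_norm]
  exact ENNReal.ofReal_le_ofReal (hA x hx)

theorem exists_sgnSum_peak {C₀ : ℝ} (hC₀ : 0 < C₀) {ε₀ : ℕ → ℝ}
    (hsgn : ∀ n, ε₀ n = 1 ∨ ε₀ n = -1) {N : ℕ}
    (hN : ∀ t : UnitAddCircle,
      ‖∑ n ∈ range (N + 1), (ε₀ n : ℂ) * fourier (n : ℤ) t‖ ≤ C₀ * √(N + 1))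
    (x₀ : UnitAddCircle) :
    ∃ f : C(UnitAddCircle, ℂ), (∀ t, ‖f t‖ ≤ 1) ∧ ∃ ε : ℤ → ℝ, IsSign ε ∧
      ∃ F : C(UnitAddCircle, ℂ), (∀ N' ≥ N, sgnSum f ε N' = F) ∧
        ∀ t, 3 * π * (N + 1) * ‖t - x₀‖ ≤ 1 → 2 / 3 * √(N + 1) / C₀ ≤ ‖F t‖ := by
  -- `f` has no negative frequencies, so the signs `ε n` for `n < 0` play no role.
  set ε : ℤ → ℝ := fun n => ε₀ n.toNat
  set s : Finset ℤ := (range (N + 1)).map Nat.castEmbedding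
  set κ : ℝ := (C₀ * √(N + 1))⁻¹
  have hκ : 0 < κ := by positivity
  have hs : s ⊆ Icc (-(N : ℤ)) N := by
    intro n hn
    obtain ⟨k, hk, rfl⟩ := Finset.mem_map.1 hn
    simp only [mem_Icc, Nat.castEmbedding_apply]
    have := mem_range.1 hk
    omega
  refine ⟨∑ n ∈ s, ((κ * ε n : ℂ) * fourier n (-x₀)) • fourier n, fun t => ?_, ε,
    fun n => hsgn _, ∑ n ∈ s, ((κ : ℂ) * fourier n (-x₀)) • fourier n, fun N' hN' => ?_,
    fun t ht => ?_⟩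
  · rw [sum_smul_fourier_neg_apply, Finset.sum_map]
    simp only [Nat.castEmbedding_apply, ε, Int.toNat_natCast, mul_assoc, ← mul_sum, norm_mul,
      Complex.norm_real, Real.norm_of_nonneg hκ.le]
    calc κ * _ ≤ κ * (C₀ * √(N + 1)) := by gcongr; exact hN _
      _ = 1 := inv_mul_cancel₀ (by positivity)
  · have hNN' : (N : ℤ) ≤ N' := by exact_mod_cast hN'
    rw [sgnSum_sum_smul_fourier (hs.trans (Icc_subset_Icc (neg_le_neg hNN') hNN'))]
    refine congrArg _ (sum_congr rfl fun n _ => congrArg (· • _) ?_)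
    rcases hsgn n.toNat with h | h <;> simp [ε, h]
  · have hfreq : ∀ n ∈ s, 3 * π * |(n : ℝ)| * ‖t - x₀‖ ≤ 1 := by
      intro n hn
      have hn' : |(n : ℝ)| ≤ N := by exact_mod_cast abs_le.2 (mem_Icc.1 (hs hn))
      calc 3 * π * |(n : ℝ)| * ‖t - x₀‖ ≤ 3 * π * (N + 1) * ‖t - x₀‖ := by
            gcongr; linarith
        _ ≤ 1 := ht
    rw [sum_smul_fourier_neg_apply, ← mul_sum, norm_mul, Complex.norm_real,
      Real.norm_of_nonneg hκ.le]
    calc 2 / 3 * √(N + 1) / C₀ = κ * (2 / 3 * #s) := by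
          have : (0 : ℝ) < √(N + 1) := by positivity
          simp only [κ, s, card_map, card_range, Nat.cast_add, Nat.cast_one]
          field_simp
          exact Real.sq_sqrt (by positivity)
      _ ≤ κ * ‖∑ n ∈ s, fourier n (t - x₀)‖ := by
          gcongr; exact two_thirds_mul_card_le_norm_sum_fourier s _ hfreq

theorem ofReal_le_eLpNorm_indicator_of_peak {C₀ q : ℝ} (hC₀ : 0 < C₀) (hq₀ : 0 < q)
    (hq₁ : q < 1) {N : ℕ} {x₀ : UnitAddCircle} {E : Set UnitAddCircle} (hE : MeasurableSet E)
    (hdens : ENNReal.ofReal q * volume (closedBall x₀ (q / (3 * π * (N + 1))))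
      ≤ volume (E ∩ closedBall x₀ (q / (3 * π * (N + 1)))))
    {F : C(UnitAddCircle, ℂ)}
    (hF : ∀ t, 3 * π * (N + 1) * ‖t - x₀‖ ≤ 1 → 2 / 3 * √(N + 1) / C₀ ≤ ‖F t‖) :
    ENNReal.ofReal (q * (2 * √2 / (3 * √(3 * π) * C₀))) ≤ eLpNorm (E.indicator F) 2 volume := by
  set r := q / (3 * π * (N + 1))
  set m := 2 / 3 * √(N + 1) / C₀
  have hpeak : ∀ t ∈ E ∩ closedBall x₀ r, m ≤ ‖E.indicator F t‖ := by
    rintro t ⟨htE, htB⟩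
    rw [Set.indicator_of_mem htE]
    refine hF t ?_
    rw [mem_closedBall, dist_eq_norm] at htB
    calc 3 * π * (N + 1) * ‖t - x₀‖ ≤ 3 * π * (N + 1) * r := by gcongr
      _ = q := by simp only [r]; field_simp
      _ ≤ 1 := hq₁.le
  have hvol : ENNReal.ofReal (q * (2 * r)) ≤ volume (E ∩ closedBall x₀ r) := by
    have h2r : 2 * r ≤ 1 := by
      rw [← mul_div_assoc, div_le_one (by positivity)]
      nlinarith [Real.pi_gt_three, (N.cast_nonneg : (0 : ℝ) ≤ N)]
    rw [ENNReal.ofReal_mul hq₀.le, ← min_eq_right h2r, ← AddCircle.volume_closedBall]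
    exact hdens
  have harith : (q * (2 * √2 / (3 * √(3 * π) * C₀))) ^ 2 = m ^ 2 * (q * (2 * r)) := by
    simp only [m, r, mul_pow, div_pow, Real.sq_sqrt zero_le_two,
      Real.sq_sqrt (by positivity : (0 : ℝ) ≤ 3 * π),
      Real.sq_sqrt (by positivity : (0 : ℝ) ≤ N + 1)]
    field_simp
  rw [← ENNReal.pow_le_pow_left_iff two_ne_zero]
  calc _ = ENNReal.ofReal m ^ 2 * ENNReal.ofReal (q * (2 * r)) := by
        rw [← ENNReal.ofReal_pow, ← ENNReal.ofReal_pow, ← ENNReal.ofReal_mul, harith] <;> positivity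
    _ ≤ ENNReal.ofReal m ^ 2 * volume (E ∩ closedBall x₀ r) := by gcongr
    _ ≤ _ := ofReal_sq_mul_measure_le_eLpNorm_sq
      (F.continuous.aestronglyMeasurable.indicator hE) hpeak

theorem stmt_10_general (C₀ : ℝ) (ε₀ : ℕ → ℝ)
    (hsgn : ∀ n, ε₀ n = 1 ∨ ε₀ n = -1)
    (hbound : ∃ᶠ N in atTop,
      ∀ t : UnitAddCircle,
        ‖∑ n ∈ Finset.range (N + 1), (ε₀ n : ℂ) * fourier (n : ℤ) t‖
          ≤ C₀ * Real.sqrt (N + 1)) :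
    ∀ c : ℝ, 0 < c → c < 2 * Real.sqrt 2 / (3 * Real.sqrt (3 * Real.pi) * C₀) →
      ∀ E : Set UnitAddCircle, MeasurableSet E → 0 < muT E →
        ∃ f : C(UnitAddCircle, ℂ), (∀ t, ‖f t‖ ≤ 1) ∧
          ∃ ε : ℤ → ℝ, IsSign ε ∧
            ∃ F : UnitAddCircle → ℂ, MemLp F 2 muT ∧
              Tendsto (fun N => eLpNorm (fun t => sgnSum f ε N t - F t) 2 muT)
                atTop (nhds 0) ∧
              ENNReal.ofReal c ≤ eLpNorm (E.indicator F) 2 muT := by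
  intro c hc hclt E hE hEpos
  set κ := 2 * √2 / (3 * √(3 * π) * C₀)
  have hκ : 0 < κ := hc.trans hclt
  have hC₀ : 0 < C₀ := pos_of_mul_pos_right ((div_pos_iff_of_pos_left (by positivity)).1 hκ)
    (by positivity)
  obtain ⟨q, hq₀, hq₁, rfl⟩ : ∃ q, 0 < q ∧ q < 1 ∧ c = q * κ :=
    ⟨c / κ, div_pos hc hκ, (div_lt_one hκ).2 hclt, (div_mul_cancel₀ c hκ.ne').symm⟩
  rw [muT_eq_volume] at hEpos ⊢
  obtain ⟨x₀, hx₀⟩ := IsUnifLocDoublingMeasure.exists_eventually_le_measure_inter_closedBall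
    volume hEpos.ne' (ENNReal.ofReal_lt_one.2 hq₁)
  have hr : Tendsto (fun N : ℕ => q / (3 * π * (N + 1))) atTop (𝓝[>] 0) := by
    refine tendsto_nhdsWithin_iff.2 ⟨tendsto_const_nhds.div_atTop ?_,
      Eventually.of_forall fun N => Set.mem_Ioi.2 (by positivity)⟩
    exact (tendsto_natCast_atTop_atTop.atTop_add tendsto_const_nhds).const_mul_atTop
      (by positivity)
  obtain ⟨N, hbN, hdN⟩ := (hbound.and_eventually (hr.eventually hx₀)).exists
  obtain ⟨f, hf, ε, hε, F, hFε, hF⟩ := exists_sgnSum_peak hC₀ hsgn hbN x₀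
  refine ⟨f, hf, ε, hε, F, F.memLp volume ℂ, tendsto_const_nhds.congr' ?_,
    ofReal_le_eLpNorm_indicator_of_peak hC₀ hq₀ hq₁ hE hdN hF⟩
  filter_upwards [eventually_ge_atTop N] with N' hN'
  simp [hFε N' hN']

/-- Quantitative lower bound: from signs with `‖∑_{n=0}^N ε_n e_n‖_∞ ≤ C₀√(N+1)` for
infinitely many `N`, one gets, for every set `E` of positive measure and every
`c < (2√2)/(3√(3π) C₀)`, a continuous `f` with `‖f‖_∞ ≤ 1` and signs `ε` with
`‖T_ε[f]·𝟙_E‖₂ ≥ c`. -/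
theorem stmt_10 (C₀ : ℝ) (hC₀ : 1 ≤ C₀) (ε₀ : ℕ → ℝ)
    (hsgn : ∀ n, ε₀ n = 1 ∨ ε₀ n = -1)
    (hbound : ∃ᶠ N in atTop,
      ∀ t : UnitAddCircle,
        ‖∑ n ∈ Finset.range (N + 1), (ε₀ n : ℂ) * fourier (n : ℤ) t‖
          ≤ C₀ * Real.sqrt (N + 1)) :
    ∀ c : ℝ, 0 < c → c < 2 * Real.sqrt 2 / (3 * Real.sqrt (3 * Real.pi) * C₀) →
      ∀ E : Set UnitAddCircle, MeasurableSet E → 0 < muT E →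
        ∃ f : C(UnitAddCircle, ℂ), (∀ t, ‖f t‖ ≤ 1) ∧
          ∃ ε : ℤ → ℝ, IsSign ε ∧
            ∃ F : UnitAddCircle → ℂ, MemLp F 2 muT ∧
              Tendsto (fun N => eLpNorm (fun t => sgnSum f ε N t - F t) 2 muT)
                atTop (nhds 0) ∧
              ENNReal.ofReal c ≤ eLpNorm (E.indicator F) 2 muT :=
  stmt_10_general C₀ ε₀ hsgn hbound
end

section
/- Let f ∈ L∞(𝕋) be such that f̂(n) is real for every n ∈ ℤ and such that sup ‖S_{σ,N}[f]‖_∞ < ∞, the supremum being over all bijections σ : ℤ → ℤ and all N ∈ ℕ. Let g ∈ L²(𝕋) be the function with ĝ(n) = |f̂(n)| for all n ∈ ℤ. Then sup ‖S_{σ,N}[g]‖_∞ < ∞, where again the supremum is over all bijections σ : ℤ → ℤ and all N ∈ ℕ. -/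
open MeasureTheory Filter Topology ComplexConjugate
open scoped ENNReal

/-! A rearranged partial sum is the sum of the Fourier series over an arbitrary set of `2N + 1`
frequencies, so bounded rearranged sums bound every finite partial sum of odd size, and, adding
and removing one term, of any size. Since `f̂` is real, the frequencies where `f̂ ≥ 0` and those
where `f̂ < 0` split a partial sum of `g` into the difference of two partial sums of `f`. -/

theorem Finset.exists_equiv_image_eq {α : Type*} [Infinite α] [DecidableEq α] {s t : Finset α}
    (h : s.card = t.card) : ∃ σ : α ≃ α, s.image σ = t := by
  let e := Finset.equivOfCardEq h
  let f : (s : Set α) ↪ α := ⟨fun x => e x, fun x y hxy => e.injective (Subtype.ext hxy)⟩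
  have hs : Cardinal.mk (s : Set α) < Cardinal.mk α :=
    (Cardinal.mk_coe_finset.trans_lt Cardinal.natCast_lt_aleph0).trans_le
      (Cardinal.aleph0_le_mk α)
  obtain ⟨σ, hσ⟩ := Cardinal.extend_function_of_lt f hs ⟨Equiv.refl α⟩
  refine ⟨σ, Finset.eq_of_subset_of_card_le ?_ ?_⟩
  · intro y hy
    obtain ⟨x, hx, rfl⟩ := Finset.mem_image.1 hy
    rw [hσ ⟨x, hx⟩]
    exact (e ⟨x, hx⟩).2
  · rw [Finset.card_image_of_injective _ σ.injective, h]

theorem Int.card_Icc_neg_self (N : ℕ) : (Finset.Icc (-(N : ℤ)) N).card = 2 * N + 1 := by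
  rw [Int.card_Icc]
  omega

noncomputable def trigPoly (c : ℤ → ℂ) (A : Finset ℤ) (t : UnitAddCircle) : ℂ :=
  ∑ n ∈ A, c n * fourier n t

theorem continuous_trigPoly (c : ℤ → ℂ) (A : Finset ℤ) : Continuous (trigPoly c A) :=
  continuous_finsetSum _ fun n _ => continuous_const.mul (map_continuous (fourier n))

theorem eLpNorm_trigPoly_sub_le {μ : Measure UnitAddCircle} {p : ℝ≥0∞} (hp : 1 ≤ p)
    (c : ℤ → ℂ) (A B : Finset ℤ) :
    eLpNorm (trigPoly c A - trigPoly c B) p μ ≤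
      eLpNorm (trigPoly c A) p μ + eLpNorm (trigPoly c B) p μ :=
  eLpNorm_sub_le (continuous_trigPoly c A).aestronglyMeasurable
    (continuous_trigPoly c B).aestronglyMeasurable hp

theorem rSum_eq_trigPoly (f : UnitAddCircle → ℂ) (σ : ℤ ≃ ℤ) (N : ℕ) :
    rSum f σ N = trigPoly (fourierCoeff f) ((Finset.Icc (-(N : ℤ)) N).image σ) := by
  funext t
  rw [trigPoly, Finset.sum_image fun x _ y _ h => σ.injective h, rSum]

theorem trigPoly_norm_eq_sub (c : ℤ → ℂ) (hc : ∀ n, (c n).im = 0) (A : Finset ℤ) :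
    trigPoly (fun n => (‖c n‖ : ℂ)) A =
      trigPoly c {n ∈ A | 0 ≤ (c n).re} - trigPoly c {n ∈ A | ¬0 ≤ (c n).re} := by
  have hnorm n : (‖c n‖ : ℂ) = if 0 ≤ (c n).re then c n else -c n := by
    obtain ⟨r, hr⟩ : ∃ r : ℝ, c n = r := ⟨(c n).re, Complex.ext rfl (by simp [hc n])⟩
    rw [hr, Complex.norm_real, Real.norm_eq_abs, Complex.ofReal_re]
    split_ifs with h
    · rw [abs_of_nonneg h]
    · rw [abs_of_neg (not_le.1 h), Complex.ofReal_neg]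
  funext t
  simp only [trigPoly, Pi.sub_apply, hnorm, ite_mul, neg_mul, Finset.sum_ite,
    Finset.sum_neg_distrib, sub_eq_add_neg]

section BoundedRearrangements

variable {f : UnitAddCircle → ℂ} {μ : Measure UnitAddCircle} {p : ℝ≥0∞} {M : ℝ≥0∞}

theorem eLpNorm_trigPoly_le_of_odd (hM : ∀ σ N, eLpNorm (rSum f σ N) p μ ≤ M)
    {A : Finset ℤ} (hA : Odd A.card) : eLpNorm (trigPoly (fourierCoeff f) A) p μ ≤ M := by
  obtain ⟨N, hN⟩ := hA
  obtain ⟨σ, hσ⟩ := Finset.exists_equiv_image_eq ((Int.card_Icc_neg_self N).trans hN.symm)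
  rw [← hσ, ← rSum_eq_trigPoly]
  exact hM σ N

theorem eLpNorm_trigPoly_le (hp : 1 ≤ p) (hM : ∀ σ N, eLpNorm (rSum f σ N) p μ ≤ M)
    (A : Finset ℤ) : eLpNorm (trigPoly (fourierCoeff f) A) p μ ≤ M + M := by
  classical
  rcases Nat.even_or_odd A.card with hA | hA
  · obtain ⟨m, hm⟩ := Infinite.exists_notMem_finset A
    have hsplit : trigPoly (fourierCoeff f) A =
        trigPoly (fourierCoeff f) (insert m A) - trigPoly (fourierCoeff f) {m} := by
      funext t
      simp [trigPoly, Finset.sum_insert hm]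
    rw [hsplit]
    have hodd : Odd (insert m A).card := by
      rw [Finset.card_insert_of_notMem hm]
      exact hA.add_one
    exact (eLpNorm_trigPoly_sub_le hp _ _ _).trans
      (add_le_add (eLpNorm_trigPoly_le_of_odd hM hodd) (eLpNorm_trigPoly_le_of_odd hM (by simp)))
  · exact (eLpNorm_trigPoly_le_of_odd hM hA).trans le_add_self

end BoundedRearrangements

theorem stmt_15_general (f g : UnitAddCircle → ℂ)
    (hreal : ∀ n : ℤ, (fourierCoeff f n).im = 0)
    (hbd : (⨆ (σ : ℤ ≃ ℤ) (N : ℕ), eLpNorm (fun t => rSum f σ N t) ⊤ muT) < ⊤)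
    (hgc : ∀ n : ℤ, fourierCoeff g n = ((‖fourierCoeff f n‖ : ℝ) : ℂ)) :
    (⨆ (σ : ℤ ≃ ℤ) (N : ℕ), eLpNorm (fun t => rSum g σ N t) ⊤ muT) < ⊤ := by
  set M := ⨆ (σ : ℤ ≃ ℤ) (N : ℕ), eLpNorm (fun t => rSum f σ N t) ⊤ muT
  have hM σ N : eLpNorm (rSum f σ N) ⊤ muT ≤ M :=
    le_iSup₂ (f := fun σ N => eLpNorm (rSum f σ N) ⊤ muT) σ N
  have hg σ N : eLpNorm (rSum g σ N) ⊤ muT ≤ (M + M) + (M + M) := by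
    have hcoeff : fourierCoeff g = fun n => (‖fourierCoeff f n‖ : ℂ) := funext hgc
    rw [rSum_eq_trigPoly, hcoeff, trigPoly_norm_eq_sub _ hreal]
    exact (eLpNorm_trigPoly_sub_le le_top _ _ _).trans
      (add_le_add (eLpNorm_trigPoly_le le_top hM _) (eLpNorm_trigPoly_le le_top hM _))
  have hMM : M + M < ⊤ := ENNReal.add_lt_top.2 ⟨hbd, hbd⟩
  exact (iSup₂_le hg).trans_lt (ENNReal.add_lt_top.2 ⟨hMM, hMM⟩)

/-- If `f ∈ L∞` has real Fourier coefficients and uniformly bounded rearranged partial sums,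
and `g ∈ L²` satisfies `ĝ(n) = |f̂(n)|`, then `g` has uniformly bounded rearranged partial
sums as well. -/
theorem stmt_15 (f g : UnitAddCircle → ℂ) (hf : MemLp f ⊤ muT)
    (hreal : ∀ n : ℤ, (fourierCoeff f n).im = 0)
    (hbd : (⨆ (σ : ℤ ≃ ℤ) (N : ℕ), eLpNorm (fun t => rSum f σ N t) ⊤ muT) < ⊤)
    (hg : MemLp g 2 muT)
    (hgc : ∀ n : ℤ, fourierCoeff g n = ((‖fourierCoeff f n‖ : ℝ) : ℂ)) :
    (⨆ (σ : ℤ ≃ ℤ) (N : ℕ), eLpNorm (fun t => rSum g σ N t) ⊤ muT) < ⊤ :=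
  stmt_15_general f g hreal hbd hgc
end
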